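/- arXiv:2509.26597 — 2 statements merged into one kernel-verified Lean document; each statement's English description precedes it below -/
import Mathlib

section
/- Let b : [0,∞) → ℝ be differentiable with b(0) ≥ 0, and let α : ℝ → ℝ be a continuous, strictly increasing function with α(0) = 0 (an extended class-K function) that is Lipschitz continuous. If b'(t) ≥ -α(b(t)) for all t ≥ 0, then b(t) ≥ 0 for all t ≥ 0. -/
theorem barrier_nonneg_classK (b b' : ℝ → ℝ) (α : ℝ → ℝ)
    (hαcont : Continuous α) (hαmono : StrictMono α) (hα0 : α 0 = 0)
    (L : ℝ) (hαlip : ∀ a c, |α a - α c| ≤ L * |a - c|)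
    (hderiv : ∀ t, HasDerivAt b (b' t) t)
    (hineq : ∀ t, 0 ≤ t → b' t ≥ -α (b t))
    (h0 : b 0 ≥ 0) :
    ∀ t, 0 ≤ t → b t ≥ 0 := by
  intro t ht
  by_contra hneg
  push_neg at hneg
  have hbcont : Continuous b := by
    rw [continuous_iff_continuousAt]
    exact fun x => (hderiv x).continuousAt
  set S : Set ℝ := {u | u ∈ Set.Icc 0 t ∧ 0 ≤ b u} with hSdef
  have hS0 : (0 : ℝ) ∈ S := ⟨⟨le_refl 0, ht⟩, h0⟩
  have hSbdd : BddAbove S := ⟨t, fun u hu => hu.1.2⟩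
  have hSclosed : IsClosed S := by
    have : S = Set.Icc 0 t ∩ b ⁻¹' (Set.Ici 0) := by
      ext u; simp [hSdef, Set.mem_Ici, and_assoc]
    rw [this]
    exact isClosed_Icc.inter (isClosed_Ici.preimage hbcont)
  set s := sSup S with hs
  have hsS : s ∈ S := hSclosed.csSup_mem ⟨0, hS0⟩ hSbdd
  have hst : s ≤ t := hsS.1.2
  have hbs : 0 ≤ b s := hsS.2
  have hslt : s < t := by
    rcases lt_or_eq_of_le hst with h | h
    · exact h
    · rw [h] at hbs; exact absurd hbs (not_le.2 hneg)
  have hnegafter : ∀ u, s < u → u ≤ t → b u < 0 := by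
    intro u hsu hut
    by_contra h
    push_neg at h
    have hu : u ∈ S := ⟨⟨le_trans hsS.1.1 hsu.le, hut⟩, h⟩
    exact absurd (le_csSup hSbdd hu) (not_le.2 hsu)
  -- auxiliary function g u = b u * exp (-L * u)
  have hE : ∀ u : ℝ, HasDerivAt (fun y => Real.exp (-L * y)) (Real.exp (-L * u) * (-L)) u := by
    intro u
    have h1 : HasDerivAt (fun y : ℝ => -L * y) (-L) u := by
      simpa using (hasDerivAt_id u).const_mul (-L)
    exact h1.exp
  have hg : ∀ u : ℝ, HasDerivAt (fun y => b y * Real.exp (-L * y))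
      (b' u * Real.exp (-L * u) + b u * (Real.exp (-L * u) * (-L))) u := by
    intro u
    exact (hderiv u).mul (hE u)
  have hmono : MonotoneOn (fun u => b u * Real.exp (-L * u)) (Set.Icc s t) := by
    apply monotoneOn_of_deriv_nonneg (convex_Icc s t)
    · exact (hbcont.mul (Real.continuous_exp.comp (continuous_const.mul continuous_id))).continuousOn
    · intro u _
      exact (hg u).differentiableAt.differentiableWithinAt
    · intro u hu
      rw [interior_Icc] at hu
      rw [(hg u).deriv]
      have hbu : b u < 0 := hnegafter u hu.1 hu.2.le
      have hu0 : 0 ≤ u := le_trans hsS.1.1 hu.1.le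
      have h1 : b' u ≥ -α (b u) := hineq u hu0
      have h2 : α (b u) ≤ L * |b u| := by
        have := hαlip (b u) 0
        rw [hα0, sub_zero, sub_zero] at this
        exact (le_abs_self _).trans this
      have h3 : L * |b u| = -(L * b u) := by
        rw [abs_of_neg hbu]; ring
      have h4 : b' u - L * b u ≥ 0 := by
        have : -α (b u) ≥ L * b u := by linarith [h2, h3.symm ▸ h2]
        linarith
      have hEpos : 0 < Real.exp (-L * u) := Real.exp_pos _
      nlinarith [hEpos, h4]
  have hle := hmono (Set.left_mem_Icc.2 hst) (Set.right_mem_Icc.2 hst) hst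
  simp only at hle
  have hgs : 0 ≤ b s * Real.exp (-L * s) :=
    mul_nonneg hbs (Real.exp_pos _).le
  have hgt : b t * Real.exp (-L * t) < 0 :=
    mul_neg_of_neg_of_pos hneg (Real.exp_pos _)
  linarith
end

section
/- Let α : ℝ → ℝ be continuous, strictly increasing with α(0) = 0, and let b : [0, T] → ℝ be differentiable with b'(t) ≥ -α(b(t)) and b(0) > 0. Then the set {t ∈ [0,T] : b(t) ≥ 0} is all of [0,T], i.e. b(t) ≥ 0 for all t ∈ [0, T]. -/
theorem barrier_nonneg_on_interval (α : ℝ → ℝ)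
    (hαcont : Continuous α) (hαmono : StrictMono α) (hα0 : α 0 = 0)
    (T : ℝ) (hT : 0 ≤ T) (b b' : ℝ → ℝ)
    (hderiv : ∀ t ∈ Set.Icc 0 T, HasDerivAt b (b' t) t)
    (hineq : ∀ t ∈ Set.Icc 0 T, b' t ≥ -α (b t))
    (h0 : b 0 > 0) :
    {t ∈ Set.Icc 0 T | b t ≥ 0} = Set.Icc 0 T := by
  have hbc : ContinuousOn b (Set.Icc 0 T) :=
    fun t ht => (hderiv t ht).continuousAt.continuousWithinAt
  apply Set.eq_of_subset_of_subset (fun t ht => ht.1)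
  intro t₀ ht₀
  refine ⟨ht₀, ?_⟩
  by_contra hneg
  push_neg at hneg
  -- b t₀ < 0
  have ht₀0 : (0:ℝ) ≤ t₀ := ht₀.1
  have hsub : Set.Icc (0:ℝ) t₀ ⊆ Set.Icc 0 T := Set.Icc_subset_Icc le_rfl ht₀.2
  have hbc' : ContinuousOn b (Set.Icc 0 t₀) := hbc.mono hsub
  set S : Set ℝ := Set.Icc 0 t₀ ∩ b ⁻¹' {0} with hS
  have hSne : S.Nonempty := by
    have : (0:ℝ) ∈ Set.Icc (b t₀) (b 0) := ⟨hneg.le, h0.le⟩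
    obtain ⟨c, hc, hbc0⟩ := intermediate_value_Icc' ht₀0 hbc' this
    exact ⟨c, hc, hbc0⟩
  have hSclosed : IsClosed S :=
    hbc'.preimage_isClosed_of_isClosed isClosed_Icc isClosed_singleton
  have hScompact : IsCompact S :=
    (isCompact_Icc).of_isClosed_subset hSclosed Set.inter_subset_left
  set t₁ := sSup S with ht₁def
  have ht₁S : t₁ ∈ S := hScompact.sSup_mem hSne
  have ht₁mem : t₁ ∈ Set.Icc 0 t₀ := ht₁S.1
  have hbt₁ : b t₁ = 0 := ht₁S.2
  have ht₁lt : t₁ < t₀ := lt_of_le_of_ne ht₁mem.2 (fun h => by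
    rw [h] at hbt₁; linarith)
  -- b is negative on (t₁, t₀]
  have hbneg : ∀ t ∈ Set.Ioc t₁ t₀, b t < 0 := by
    intro t ht
    by_contra h
    push_neg at h
    have htmem : t ∈ Set.Icc 0 t₀ := ⟨le_trans ht₁mem.1 ht.1.le, ht.2⟩
    have : (0:ℝ) ∈ Set.Icc (b t₀) (b t) := ⟨hneg.le, h⟩
    obtain ⟨c, hc, hbc0⟩ := intermediate_value_Icc' ht.2
      (hbc'.mono (Set.Icc_subset_Icc htmem.1 le_rfl)) this
    have hcS : c ∈ S := ⟨⟨le_trans htmem.1 hc.1, hc.2⟩, hbc0⟩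
    have : c ≤ t₁ := le_csSup hScompact.bddAbove hcS
    linarith [ht.1, hc.1]
  -- b' > 0 on (t₁, t₀)
  have hmono : StrictMonoOn b (Set.Icc t₁ t₀) := by
    apply strictMonoOn_of_deriv_pos (convex_Icc _ _)
      (hbc.mono (Set.Icc_subset_Icc ht₁mem.1 ht₀.2))
    intro x hx
    rw [interior_Icc] at hx
    have hxT : x ∈ Set.Icc 0 T :=
      ⟨le_trans ht₁mem.1 hx.1.le, le_trans hx.2.le ht₀.2⟩
    rw [(hderiv x hxT).deriv]
    have hbx : b x < 0 := hbneg x ⟨hx.1, hx.2.le⟩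
    have : α (b x) < 0 := by
      have := hαmono hbx
      rwa [hα0] at this
    linarith [hineq x hxT]
  have := hmono (Set.left_mem_Icc.mpr ht₁lt.le) (Set.right_mem_Icc.mpr ht₁lt.le) ht₁lt
  rw [hbt₁] at this
  linarith
end
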